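/- Let γ : [0,1] → ℝ² be a continuously differentiable path with γ(t) ≠ 0 for all t ∈ [0,1]. Then ∫₀¹ ‖γ'(t)‖ / ‖γ(t)‖ dt ≥ angle(γ(0), γ(1)), where angle(u, v) = arccos( ⟨u, v⟩ / (‖u‖·‖v‖) ) is the unsigned angle between the nonzero vectors γ(0) and γ(1). -/

import Mathlib

/-!
Identify the plane with `ℂ`. Along a nonvanishing `C¹` path `δ`, the function
`δ · exp (-∫ δ' / δ)` has zero derivative, so `δ b / δ a = exp (∫ₐᵇ δ' / δ)`. The angle between
`δ a` and `δ b` is `|arg (δ b / δ a)|`, which is at most the absolute value of the imaginary part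
of this integral, hence at most `∫ₐᵇ ‖δ'‖ / ‖δ‖`.
-/

open Real Set InnerProductGeometry Module

theorem ContinuousOn.hasDerivWithinAt_integral_Icc {E : Type*} [NormedAddCommGroup E]
    [NormedSpace ℝ E] [CompleteSpace E] {f : ℝ → E} {a b t : ℝ}
    (hf : ContinuousOn f (Icc a b)) (ht : t ∈ Icc a b) :
    HasDerivWithinAt (fun u ↦ ∫ s in a..u, f s) (f t) (Icc a b) t := by
  have : Fact (t ∈ Icc a b) := ⟨ht⟩
  refine intervalIntegral.integral_hasDerivWithinAt_right ?_
    (hf.stronglyMeasurableAtFilter_nhdsWithin measurableSet_Icc t) (hf t ht)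
  exact (hf.mono (uIcc_subset_Icc (left_mem_Icc.2 (ht.1.trans ht.2)) ht)).intervalIntegrable

theorem Complex.abs_arg_exp_le_abs_im (z : ℂ) : |(exp z).arg| ≤ |z.im| := by
  rcases le_or_gt π |z.im| with h | h
  · exact (abs_arg_le_pi _).trans h
  · rw [arg_exp, (toIocMod_eq_self _).2
      ⟨by linarith [neg_abs_le z.im], by linarith [le_abs_self z.im]⟩]

theorem Complex.div_eq_exp_integral_derivWithin_div {δ : ℝ → ℂ} {a b : ℝ} (hab : a < b)
    (hδ : ContDiffOn ℝ 1 δ (Icc a b)) (h0 : ∀ t ∈ Icc a b, δ t ≠ 0) :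
    δ b / δ a = exp (∫ t in a..b, derivWithin δ (Icc a b) t / δ t) := by
  set δ' := derivWithin δ (Icc a b)
  set L : ℝ → ℂ := fun u ↦ ∫ t in a..u, δ' t / δ t
  have hud : UniqueDiffOn ℝ (Icc a b) := uniqueDiffOn_Icc hab
  have hL : ∀ t ∈ Icc a b, HasDerivWithinAt L (δ' t / δ t) (Icc a b) t :=
    fun t ↦ ((hδ.continuousOn_derivWithin hud le_rfl).div
      hδ.continuousOn h0).hasDerivWithinAt_integral_Icc
  have hδ' : ∀ t ∈ Icc a b, HasDerivWithinAt δ (δ' t) (Icc a b) t :=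
    fun t ht ↦ (hδ.differentiableOn one_ne_zero t ht).hasDerivWithinAt
  have hconst : ∀ t ∈ Icc a b, HasDerivWithinAt (fun u ↦ δ u * exp (-L u)) 0 (Icc a b) t := by
    intro t ht
    refine ((hδ' t ht).mul (hL t ht).neg.cexp).congr_deriv ?_
    field_simp [h0 t ht]
    ring
  have hb := constant_of_derivWithin_zero (fun t ht ↦ (hconst t ht).differentiableWithinAt)
    (fun t ht ↦ (hconst t (Ico_subset_Icc_self ht)).derivWithin (hud t (Ico_subset_Icc_self ht)))
    b (right_mem_Icc.2 hab.le)
  simp only [L, intervalIntegral.integral_same, neg_zero, exp_zero, mul_one] at hb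
  rw [div_eq_iff (h0 a (left_mem_Icc.2 hab.le)), ← hb, mul_left_comm, ← exp_add, add_neg_cancel,
    exp_zero, mul_one]

theorem Complex.angle_le_integral_norm_derivWithin_div_norm {δ : ℝ → ℂ} {a b : ℝ} (hab : a < b)
    (hδ : ContDiffOn ℝ 1 δ (Icc a b)) (h0 : ∀ t ∈ Icc a b, δ t ≠ 0) :
    angle (δ a) (δ b) ≤ ∫ t in a..b, ‖derivWithin δ (Icc a b) t‖ / ‖δ t‖ := by
  set L := ∫ t in a..b, derivWithin δ (Icc a b) t / δ t
  calc angle (δ a) (δ b) = |(exp L).arg| := by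
        rw [angle_comm, angle_eq_abs_arg (h0 b (right_mem_Icc.2 hab.le))
          (h0 a (left_mem_Icc.2 hab.le)), div_eq_exp_integral_derivWithin_div hab hδ h0]
    _ ≤ |L.im| := abs_arg_exp_le_abs_im L
    _ ≤ ‖L‖ := abs_im_le_norm L
    _ ≤ ∫ t in a..b, ‖derivWithin δ (Icc a b) t / δ t‖ :=
        intervalIntegral.norm_integral_le_integral_norm hab.le
    _ = ∫ t in a..b, ‖derivWithin δ (Icc a b) t‖ / ‖δ t‖ := by simp only [norm_div]

theorem LinearIsometryEquiv.derivWithin_comp {F G : Type*} [NormedAddCommGroup F]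
    [NormedSpace ℝ F] [NormedAddCommGroup G] [NormedSpace ℝ G] (e : F ≃ₗᵢ[ℝ] G) {γ : ℝ → F}
    {s : Set ℝ} {t : ℝ} (hs : UniqueDiffWithinAt ℝ s t) :
    derivWithin (e ∘ γ) s t = e (derivWithin γ s t) := by
  simp only [← fderivWithin_derivWithin, e.comp_fderivWithin hs]
  rfl

theorem angle_le_integral_norm_derivWithin_div_norm {F : Type*} [NormedAddCommGroup F]
    [InnerProductSpace ℝ F] (hF : finrank ℝ F = 2) {γ : ℝ → F} {a b : ℝ} (hab : a < b)
    (hγ : ContDiffOn ℝ 1 γ (Icc a b)) (h0 : ∀ t ∈ Icc a b, γ t ≠ 0) :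
    angle (γ a) (γ b) ≤ ∫ t in a..b, ‖derivWithin γ (Icc a b) t‖ / ‖γ t‖ := by
  have : FiniteDimensional ℝ F := .of_finrank_eq_succ hF
  let e : F ≃ₗᵢ[ℝ] ℂ := ((stdOrthonormalBasis ℝ F).reindex (finCongr hF)).repr.trans
    Complex.orthonormalBasisOneI.repr.symm
  calc angle (γ a) (γ b) = angle (e (γ a)) (e (γ b)) := (e.toLinearIsometry.angle_map _ _).symm
    _ ≤ ∫ t in a..b, ‖derivWithin (e ∘ γ) (Icc a b) t‖ / ‖e (γ t)‖ :=
        Complex.angle_le_integral_norm_derivWithin_div_norm (δ := e ∘ γ) hab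
          (e.contDiff.comp_contDiffOn hγ)
          fun t ht ↦ e.map_ne_zero_iff.2 (h0 t ht)
    _ = ∫ t in a..b, ‖derivWithin γ (Icc a b) t‖ / ‖γ t‖ :=
        intervalIntegral.integral_congr fun t ht ↦ by
          rw [uIcc_of_le hab.le] at ht
          simp only [e.derivWithin_comp (uniqueDiffOn_Icc hab t ht), LinearIsometryEquiv.norm_map]

/-- Lemma 2.1(ii): the cost of any C¹ path avoiding the point obstacle `0` is at
least the (unsigned) angle between its endpoints as seen from the obstacle. -/
theorem cost_ge_angle (γ : ℝ → EuclideanSpace ℝ (Fin 2))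
    (hγ : ContDiffOn ℝ 1 γ (Icc 0 1))
    (h0 : ∀ t ∈ Icc (0:ℝ) 1, γ t ≠ 0) :
    InnerProductGeometry.angle (γ 0) (γ 1) ≤
      ∫ t in (0:ℝ)..1, ‖derivWithin γ (Icc 0 1) t‖ / ‖γ t‖ :=
  angle_le_integral_norm_derivWithin_div_norm finrank_euclideanSpace_fin zero_lt_one hγ h0
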